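/- Let A be a 2×2 real symmetric positive definite matrix. Then the Kantorovich function K(x) = (xᵀAx)(xᵀA⁻¹x) is convex on ℝ² if and only if the condition number κ(A) is at most 3 + 2√2. -/

import Mathlib

open Matrix

/-!
In an orthonormal eigenbasis of `A`, with eigenvalues `a` and `b`, the Kantorovich function
becomes the binary quartic `y₀⁴ + y₁⁴ + t y₀² y₁²` with `t = a/b + b/a`; an orthogonal change of
variables does not affect convexity. For `0 ≤ t ≤ 6` the quartic is a nonnegative combination of
fourth powers of linear forms, hence convex, while for `t > 6` it is not even midpoint convex
along the anti-diagonal through `(1, 1)`. Finally, for `r = a/b ≥ 1` the condition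
`r + r⁻¹ ≤ 6` says that `r` lies below the larger root `3 + 2√2` of `r² - 6r + 1`.
-/

theorem convexOn_univ_comp_linearEquiv_iff {𝕜 E F β : Type*} [Semiring 𝕜] [PartialOrder 𝕜]
    [AddCommMonoid E] [AddCommMonoid F] [AddCommMonoid β] [PartialOrder β] [Module 𝕜 E]
    [Module 𝕜 F] [SMul 𝕜 β] (e : E ≃ₗ[𝕜] F) {f : F → β} :
    ConvexOn 𝕜 Set.univ (f ∘ e) ↔ ConvexOn 𝕜 Set.univ f := by
  refine ⟨fun h => ?_, fun h => by simpa using h.comp_linearMap e.toLinearMap⟩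
  simpa [Function.comp_def] using h.comp_linearMap e.symm.toLinearMap

theorem convexOn_univ_pow_comp_linearMap {𝕜 E : Type*} [CommRing 𝕜] [LinearOrder 𝕜]
    [IsStrictOrderedRing 𝕜] [AddCommMonoid E] [Module 𝕜 E] {n : ℕ} (hn : Even n)
    (ℓ : E →ₗ[𝕜] 𝕜) : ConvexOn 𝕜 Set.univ fun x => ℓ x ^ n :=
  hn.convexOn_pow.comp_linearMap (s := Set.univ) ℓ

theorem ciSup_fin_two {α : Type*} [ConditionallyCompleteLinearOrder α] (f : Fin 2 → α) :
    ⨆ i, f i = max (f 0) (f 1) := by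
  rw [← Finset.sup'_univ_eq_ciSup]
  simp [Fin.univ_succ]

theorem ciInf_fin_two {α : Type*} [ConditionallyCompleteLinearOrder α] (f : Fin 2 → α) :
    ⨅ i, f i = min (f 0) (f 1) := by
  rw [← Finset.inf'_univ_eq_ciInf]
  simp [Fin.univ_succ]

theorem max_div_min_add_inv {α : Type*} [Field α] [LinearOrder α] (a b : α) :
    max a b / min a b + (max a b / min a b)⁻¹ = a / b + b / a := by
  rcases le_total a b with h | h <;> simp [h, inv_div, add_comm]

theorem le_three_add_two_sqrt_two_iff {r : ℝ} (hr : 1 ≤ r) :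
    r ≤ 3 + 2 * √2 ↔ r + r⁻¹ ≤ 6 := by
  have hsq : √2 ^ 2 = 2 := Real.sq_sqrt zero_le_two
  have hfac : 6 - (r + r⁻¹) = (3 + 2 * √2 - r) * ((r - (3 - 2 * √2)) / r) := by
    field_simp
    linear_combination (-4) * hsq
  have hpos : 0 < (r - (3 - 2 * √2)) / r := by
    have := Real.one_lt_sqrt_two
    exact div_pos (by linarith) (by linarith)
  rw [← sub_nonneg, ← sub_nonneg (b := r + r⁻¹), hfac, mul_nonneg_iff_of_pos_right hpos]

def kantorovichQuartic (t : ℝ) (y : Fin 2 → ℝ) : ℝ :=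
  y 0 ^ 4 + y 1 ^ 4 + t * (y 0 ^ 2 * y 1 ^ 2)

theorem convexOn_kantorovichQuartic {t : ℝ} (ht₀ : 0 ≤ t) (ht₆ : t ≤ 6) :
    ConvexOn ℝ Set.univ (kantorovichQuartic t) := by
  set p₀ : (Fin 2 → ℝ) →ₗ[ℝ] ℝ := LinearMap.proj 0
  set p₁ : (Fin 2 → ℝ) →ₗ[ℝ] ℝ := LinearMap.proj 1
  have h4 : Even 4 := by decide
  -- `y₀⁴ + y₁⁴ + t y₀² y₁² = (1 - t/6) (y₀⁴ + y₁⁴) + (t/12) ((y₀ + y₁)⁴ + (y₀ - y₁)⁴)`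
  have hconv := (((convexOn_univ_pow_comp_linearMap h4 p₀).add
      (convexOn_univ_pow_comp_linearMap h4 p₁)).smul (by linarith : 0 ≤ 1 - t / 6)).add
    (((convexOn_univ_pow_comp_linearMap h4 (p₀ + p₁)).add
      (convexOn_univ_pow_comp_linearMap h4 (p₀ - p₁))).smul (by linarith : 0 ≤ t / 12))
  refine hconv.congr fun y _ => ?_
  simp only [kantorovichQuartic, p₀, p₁, Pi.add_apply, LinearMap.add_apply, LinearMap.sub_apply,
    LinearMap.proj_apply, smul_eq_mul]
  ring

theorem kantorovichQuartic_one_add_one_sub (t s : ℝ) :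
    kantorovichQuartic t ![1 + s, 1 - s] =
      kantorovichQuartic t ![1, 1] + s ^ 2 * (12 - 2 * t + (2 + t) * s ^ 2) := by
  simp [kantorovichQuartic]
  ring

theorem le_six_of_convexOn_kantorovichQuartic {t : ℝ}
    (h : ConvexOn ℝ Set.univ (kantorovichQuartic t)) : t ≤ 6 := by
  by_contra! ht
  -- chosen so that `12 - 2 t + (2 + t) s² = 6 - t < 0`
  set s := √((t - 6) / (t + 2))
  have hs : s ^ 2 = (t - 6) / (t + 2) := Real.sq_sqrt (div_pos (by linarith) (by linarith)).le
  have hs₀ : 0 < s ^ 2 := hs ▸ div_pos (by linarith) (by linarith)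
  have hts : (2 + t) * s ^ 2 = t - 6 := by rw [hs]; field_simp; ring
  have hmid : (1 / 2 : ℝ) • ![1 + s, 1 - s] + (1 / 2 : ℝ) • ![1 - s, 1 + s] = ![1, 1] := by
    ext i; fin_cases i <;> simp <;> ring
  have hswap : kantorovichQuartic t ![1 - s, 1 + s] = kantorovichQuartic t ![1 + s, 1 - s] := by
    simp [kantorovichQuartic]; ring
  have key := h.2 (Set.mem_univ ![1 + s, 1 - s]) (Set.mem_univ ![1 - s, 1 + s])
    (by norm_num : (0 : ℝ) ≤ 1 / 2) (by norm_num : (0 : ℝ) ≤ 1 / 2) (by norm_num)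
  rw [hmid, hswap, kantorovichQuartic_one_add_one_sub, smul_eq_mul, hts] at key
  linarith [mul_pos hs₀ (sub_pos.2 ht)]

theorem convexOn_kantorovichQuartic_iff {t : ℝ} (ht : 0 ≤ t) :
    ConvexOn ℝ Set.univ (kantorovichQuartic t) ↔ t ≤ 6 :=
  ⟨le_six_of_convexOn_kantorovichQuartic, convexOn_kantorovichQuartic ht⟩

namespace Matrix

variable {n : Type*} [Fintype n] [DecidableEq n]

theorem inv_unitary_mul_diagonal_mul_star {𝕜 : Type*} [Field 𝕜] [StarRing 𝕜]
    (U : unitaryGroup n 𝕜) {d : n → 𝕜} (hd : ∀ i, d i ≠ 0) :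
    ((U : Matrix n n 𝕜) * diagonal d * star (U : Matrix n n 𝕜))⁻¹ =
      U * diagonal d⁻¹ * star (U : Matrix n n 𝕜) := by
  refine inv_eq_left_inv ?_
  have hdd : diagonal d⁻¹ * diagonal d = 1 := by
    rw [diagonal_mul_diagonal, ← diagonal_one]
    exact congrArg diagonal (funext fun i => inv_mul_cancel₀ (hd i))
  calc _ = (U : Matrix n n 𝕜) * (diagonal d⁻¹ * (star (U : Matrix n n 𝕜) * U) * diagonal d)
          * star (U : Matrix n n 𝕜) := by simp only [Matrix.mul_assoc]
    _ = 1 := by simp [hdd]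

theorem dotProduct_mul_diagonal_mul_star_mulVec (U : Matrix n n ℝ) (d : n → ℝ) (x : n → ℝ) :
    x ⬝ᵥ ((U * diagonal d * star U) *ᵥ x) = ∑ i, d i * (star U *ᵥ x) i ^ 2 := by
  rw [← mulVec_mulVec, ← mulVec_mulVec, dotProduct_mulVec, star_eq_conjTranspose,
    conjTranspose_eq_transpose_of_trivial, ← mulVec_transpose]
  simp [dotProduct, mulVec_diagonal, sq, mul_left_comm]

theorem IsHermitian.eq_mul_diagonal_mul_star {A : Matrix n n ℝ} (hA : A.IsHermitian) :
    A = hA.eigenvectorUnitary * diagonal hA.eigenvalues *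
      star (hA.eigenvectorUnitary : Matrix n n ℝ) := by
  conv_lhs => rw [hA.spectral_theorem]
  simp [Unitary.conjStarAlgAut_apply]

end Matrix

theorem kantorovich_eq_kantorovichQuartic {A : Matrix (Fin 2) (Fin 2) ℝ}
    (U : unitaryGroup (Fin 2) ℝ) {d : Fin 2 → ℝ}
    (hA : A = U * diagonal d * star (U : Matrix (Fin 2) (Fin 2) ℝ)) (hd : ∀ i, d i ≠ 0)
    (x : Fin 2 → ℝ) :
    (x ⬝ᵥ (A *ᵥ x)) * (x ⬝ᵥ (A⁻¹ *ᵥ x)) =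
      kantorovichQuartic (d 0 / d 1 + d 1 / d 0) (star (U : Matrix (Fin 2) (Fin 2) ℝ) *ᵥ x) := by
  subst hA
  rw [inv_unitary_mul_diagonal_mul_star U hd, dotProduct_mul_diagonal_mul_star_mulVec,
    dotProduct_mul_diagonal_mul_star_mulVec]
  simp only [Fin.sum_univ_two, Pi.inv_apply, kantorovichQuartic]
  have := hd 0
  have := hd 1
  field_simp
  ring

theorem kantorovich_dim2_convex_iff_condNumber_le
    (A : Matrix (Fin 2) (Fin 2) ℝ) (hA : A.PosDef) :
    ConvexOn ℝ Set.univ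
      (fun x : Fin 2 → ℝ => (x ⬝ᵥ (A *ᵥ x)) * (x ⬝ᵥ (A⁻¹ *ᵥ x))) ↔
    (⨆ i, hA.1.eigenvalues i) / (⨅ i, hA.1.eigenvalues i) ≤ 3 + 2 * Real.sqrt 2 := by
  set ev := hA.1.eigenvalues
  have hev₀ : 0 < ev 0 := hA.eigenvalues_pos 0
  have hev₁ : 0 < ev 1 := hA.eigenvalues_pos 1
  have hK : (fun x : Fin 2 → ℝ => (x ⬝ᵥ (A *ᵥ x)) * (x ⬝ᵥ (A⁻¹ *ᵥ x))) =
      kantorovichQuartic (ev 0 / ev 1 + ev 1 / ev 0) ∘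
        UnitaryGroup.toLinearEquiv (star hA.1.eigenvectorUnitary) :=
    funext <| kantorovich_eq_kantorovichQuartic _ hA.1.eq_mul_diagonal_mul_star
      fun i => (hA.eigenvalues_pos i).ne'
  have hcond : 1 ≤ max (ev 0) (ev 1) / min (ev 0) (ev 1) :=
    (one_le_div (lt_min hev₀ hev₁)).2 min_le_max
  rw [hK, convexOn_univ_comp_linearEquiv_iff, convexOn_kantorovichQuartic_iff (by positivity),
    ciSup_fin_two, ciInf_fin_two, le_three_add_two_sqrt_two_iff hcond, max_div_min_add_inv]
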